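/- Let G = (V,E) be a finite non-bipartite simple graph with a proper 3-coloring with color classes V₁, V₂, V₃, and for each i ∈ {1,2,3} let 2ρ_i−1 be the odd girth of the (non-bipartite) contraction G/V_i. Then the integrality gap of the standard vertex cover LP relaxation of G satisfies IG(G) ≤ 1 + min_{i∈{1,2,3}} 1/(2ρ_i − 1); that is, for every w : V → ℝ≥0, OPT(G,w) ≤ (1 + min_i 1/(2ρ_i − 1)) · LP(G,w). Moreover, if one of the color classes consists of a single vertex, then IG(G) = 1 + min_{i∈{1,2,3}} 1/(2ρ_i − 1), where IG(G) is the supremum of OPT(G,w)/LP(G,w) over all w : V → ℝ≥0 with LP(G,w) > 0. -/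

import Mathlib

open Finset

/-- `C` is a vertex cover of `G`. -/
def IsVC {V : Type*} (G : SimpleGraph V) (C : Finset V) : Prop :=
  ∀ ⦃u v : V⦄, G.Adj u v → u ∈ C ∨ v ∈ C

/-- `OPT G w` : minimum weight of a vertex cover of `G`. -/
noncomputable def OPT {V : Type*} [Fintype V] (G : SimpleGraph V) (w : V → ℝ) : ℝ :=
  sInf {t : ℝ | ∃ C : Finset V, IsVC G C ∧ t = ∑ v ∈ C, w v}

/-- `LPval G w` : optimal value of the standard vertex cover LP relaxation. -/
noncomputable def LPval {V : Type*} [Fintype V] (G : SimpleGraph V) (w : V → ℝ) : ℝ :=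
  sInf {t : ℝ | ∃ x : V → ℝ, (∀ v, 0 ≤ x v) ∧ (∀ ⦃u v : V⦄, G.Adj u v → 1 ≤ x u + x v) ∧
    t = ∑ v, w v * x v}

/-- The graph `G ∖ S` (vertices of `S` kept as isolated vertices). -/
def Gdel {V : Type*} (G : SimpleGraph V) (S : Set V) : SimpleGraph V :=
  SimpleGraph.fromRel (fun u v => G.Adj u v ∧ u ∉ S ∧ v ∉ S)

open scoped Classical in
/-- Sum of `y` over the set of edges described by `P`. -/
noncomputable def ysum {V : Type*} [Fintype V] [DecidableEq V]
    (y : Sym2 V → ℝ) (P : Sym2 V → Prop) : ℝ :=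
  ∑ e : Sym2 V, if P e then y e else 0

/-- `y` is a dual certificate for `w` : a feasible dual solution with `y(δ(v)) = w v`. -/
def IsDualCert {V : Type*} [Fintype V] [DecidableEq V] (G : SimpleGraph V)
    (w : V → ℝ) (y : Sym2 V → ℝ) : Prop :=
  (∀ e, 0 ≤ y e) ∧ (∀ e, e ∉ G.edgeSet → y e = 0) ∧
    ∀ v : V, ysum y (fun e => e ∈ G.edgeSet ∧ v ∈ e) = w v

/-- Membership in the polytope `Q^W`. -/
def memQW {V : Type*} [Fintype V] [DecidableEq V] (G : SimpleGraph V) (w : V → ℝ) : Prop :=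
  (∀ v, 0 ≤ w v) ∧ (∑ v, w v) = 2 ∧ ∃ y : Sym2 V → ℝ, IsDualCert G w y

/-- `G` has odd girth `n` : it contains an odd cycle of length `n` and no shorter one. -/
def HasOddGirth {V : Type*} (G : SimpleGraph V) (n : ℕ) : Prop :=
  Odd n ∧ (∃ (v : V) (c : G.Walk v v), c.IsCycle ∧ c.length = n) ∧
    ∀ (v : V) (c : G.Walk v v), c.IsCycle → Odd c.length → n ≤ c.length

/-- The contraction `G / S` of the vertex set `S` to a single new vertex `none`. -/
def contract {V : Type*} (G : SimpleGraph V) (S : Set V) :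
    SimpleGraph (Option {v : V // v ∉ S}) :=
  SimpleGraph.fromRel (fun x y =>
    match x, y with
    | some u, some v => G.Adj u.1 v.1
    | some u, none => ∃ s ∈ S, G.Adj u.1 s
    | none, _ => False)

/-- `I` is an independent set of `G`. -/
def IsIndep {V : Type*} (G : SimpleGraph V) (I : Finset V) : Prop :=
  ∀ ⦃u⦄, u ∈ I → ∀ ⦃v⦄, v ∈ I → ¬ G.Adj u v

/-- The fractional chromatic number of `G`. -/
noncomputable def fracChrom {V : Type*} [Fintype V] [DecidableEq V] (G : SimpleGraph V) : ℝ :=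
  sInf {t : ℝ | ∃ y : Finset V → ℝ, (∀ I, 0 ≤ y I) ∧ (∀ I, ¬ IsIndep G I → y I = 0) ∧
    (∀ v : V, 1 ≤ ∑ I : Finset V, if v ∈ I then y I else 0) ∧ t = ∑ I : Finset V, y I}

/-- The integrality gap of the standard vertex cover LP relaxation of `G`. -/
noncomputable def IG {V : Type*} [Fintype V] (G : SimpleGraph V) : ℝ :=
  sSup {t : ℝ | ∃ w : V → ℝ, (∀ v, 0 ≤ w v) ∧ 0 < LPval G w ∧ t = OPT G w / LPval G w}


/-!
Fix a colour class `Vᵢ` and write `n = 2ρᵢ - 1 = 2k + 1`. In `G / Vᵢ`, layer the vertices by their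
distance from the contracted vertex, truncated at `k`, and send a vertex of layer `j` to `± j`, the
sign given by the parity of `j` and the 2-colouring of `G - Vᵢ`: this is a homomorphism
`G → G / Vᵢ → Cₙ`, because an edge inside a layer below `k` would close an odd walk shorter than
`n`. Placing `Cₙ` on a circle so that neighbours are `k/n` of a turn apart, and rounding an LP
solution `x` by a random threshold point (take `v` when `x v` exceeds its scaled distance from that
point) gives vertex covers of average weight `(1 + 1/n) ∑ w x`; the threshold is drawn from
`(2k+1)m` equally spaced points, at the price of an error `O(1/m)`.

When `Vᵢ = {s}`, the graph `G / Vᵢ` is `G` itself, so `G` has an odd closed walk of length `n`,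
which maps into every `G / Vⱼ`; hence `n` is the largest of the three odd girths. Weighting every
vertex by its number of visits by that walk, every vertex cover weighs at least `(n + 1)/2`, while
`x ≡ 1/2` has LP value `n/2`.
-/

namespace SimpleGraph.Walk

variable {W : Type*} {H : SimpleGraph W}

theorem exists_odd_isCycle_or_isPath {u v : W} (p : H.Walk u v) :
    (∃ (a : W) (c : H.Walk a a), c.IsCycle ∧ Odd c.length ∧ c.length ≤ p.length) ∨
      ∃ q : H.Walk u v, q.IsPath ∧ q.length ≤ p.length ∧ Even (p.length + q.length) := by
  classical
  induction p with
  | nil => exact .inr ⟨nil, .nil, le_rfl, by simp⟩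
  | @cons u w v h p ih =>
    rcases ih with ⟨a, c, hc, hodd, hlen⟩ | ⟨q, hq, hlen, heven⟩
    · exact .inl ⟨a, c, hc, hodd, by simp; omega⟩
    by_cases hu : u ∈ q.support
    · -- `cons h q` splits at `u` into a closed walk and a shorter path
      have hsplit := congrArg length (q.take_spec hu)
      have hpos : (q.takeUntil u hu).length ≠ 0 := fun h0 => h.ne (eq_of_length_eq_zero h0).symm
      rw [length_append] at hsplit
      rcases Nat.even_or_odd ((q.takeUntil u hu).length + 1) with hpar | hpar
      · refine .inr ⟨q.dropUntil u hu, hq.dropUntil hu, by simp; omega, ?_⟩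
        simp only [length_cons, Nat.even_iff] at heven hpar ⊢
        omega
      · refine .inl ⟨u, cons h (q.takeUntil u hu), ?_, by simpa using hpar, by simp; omega⟩
        refine isCycle_iff_isPath_tail_and_le_length.mpr ⟨by simpa using hq.takeUntil hu, ?_⟩
        simp only [length_cons, Nat.odd_iff] at hpar ⊢
        omega
    · exact .inr ⟨cons h q, hq.cons hu, by simp; omega, by
        simp only [length_cons, Nat.even_iff] at heven ⊢; omega⟩

theorem exists_odd_isCycle_of_odd_length {u : W} (c : H.Walk u u) (hc : Odd c.length) :
    ∃ (a : W) (c' : H.Walk a a), c'.IsCycle ∧ Odd c'.length ∧ c'.length ≤ c.length := by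
  refine c.exists_odd_isCycle_or_isPath.resolve_right ?_
  rintro ⟨q, hq, -, heven⟩
  rw [(isPath_iff_nil.mp hq).length_eq_zero, add_zero] at heven
  exact Nat.not_even_iff_odd.mpr hc heven

end SimpleGraph.Walk

theorem HasOddGirth.le_length {W : Type*} {H : SimpleGraph W} {n : ℕ} (hH : HasOddGirth H n)
    {u : W} (c : H.Walk u u) (hc : Odd c.length) : n ≤ c.length :=
  let ⟨_, c', hcyc, hodd, hle⟩ := c.exists_odd_isCycle_of_odd_length hc
  (hH.2.2 _ c' hcyc hodd).trans hle

section Contraction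

variable {V : Type*} {G : SimpleGraph V} {S : Set V}

@[simp]
theorem contract_adj_some_some {u v : {v // v ∉ S}} :
    (contract G S).Adj (some u) (some v) ↔ G.Adj u v := by
  simp only [contract, SimpleGraph.fromRel_adj, ne_eq, Option.some.injEq]
  exact ⟨fun h => h.2.elim id G.adj_symm, fun h => ⟨fun huv => h.ne (congrArg _ huv), .inl h⟩⟩

@[simp]
theorem contract_adj_some_none {u : {v // v ∉ S}} :
    (contract G S).Adj (some u) none ↔ ∃ s ∈ S, G.Adj u s := by
  simp [contract]

open Classical in
noncomputable def contractHom (hS : G.IsIndepSet S) : G →g contract G S where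
  toFun v := if h : v ∈ S then none else some ⟨v, h⟩
  map_rel' {u v} huv := by
    by_cases hu : u ∈ S <;> by_cases hv : v ∈ S <;> simp only [hu, hv, dite_true, dite_false]
    · exact absurd huv (hS hu hv huv.ne)
    · exact (contract_adj_some_none.mpr ⟨u, hu, huv.symm⟩).symm
    · exact contract_adj_some_none.mpr ⟨v, hv, huv⟩
    · exact contract_adj_some_some.mpr huv

def contractSingletonHom (s : V) : contract G {s} →g G where
  toFun x := x.elim s Subtype.val
  map_rel' {x y} hxy := by
    match x, y, hxy with
    | none, none, h => exact absurd h (contract G {s}).irrefl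
    | some u, none, h => simpa using h
    | none, some v, h => exact (by simpa using h.symm : G.Adj v s).symm
    | some u, some v, h => simpa using h

theorem HasOddGirth.le_length_of_contract (hS : G.IsIndepSet S) {n : ℕ}
    (h : HasOddGirth (contract G S) n) {u : V} (c : G.Walk u u) (hc : Odd c.length) :
    n ≤ c.length := by
  simpa using h.le_length (c.map (contractHom hS)) (by simpa using hc)

theorem HasOddGirth.exists_walk_of_contract_singleton {s : V} {n : ℕ}
    (h : HasOddGirth (contract G {s}) n) : ∃ (u : V) (c : G.Walk u u), c.length = n :=
  let ⟨_, c, _, hc⟩ := h.2.1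
  ⟨_, c.map (contractSingletonHom s), by simpa using hc⟩

end Contraction

section TruncDist

variable {W : Type*} (H : SimpleGraph W) (r : W) (k : ℕ)

open Classical in
/-- `SimpleGraph.dist` is `0` between vertices in different components, so the vertices not
reachable from `r` are put at level `k` explicitly. -/
noncomputable def truncDist (v : W) : ℕ :=
  if H.Reachable r v then min (H.dist r v) k else k

variable {H r k}

theorem truncDist_self : truncDist H r k r = 0 := by
  simp [truncDist]

theorem truncDist_le (v : W) : truncDist H r k v ≤ k := by
  unfold truncDist
  split <;> omega

theorem truncDist_le_add_one_of_adj {u v : W} (huv : H.Adj u v) :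
    truncDist H r k v ≤ truncDist H r k u + 1 := by
  by_cases hu : H.Reachable r u
  · have := huv.diff_dist_adj (u := r)
    simp only [truncDist, hu, hu.trans huv.reachable, if_true]
    omega
  · simp only [truncDist, hu, if_false]
    split <;> omega

theorem truncDist_eq_of_adj (hlen : ∀ c : H.Walk r r, Odd c.length → 2 * k + 1 ≤ c.length)
    {u v : W} (huv : H.Adj u v) (heq : truncDist H r k u = truncDist H r k v) :
    truncDist H r k u = k := by
  have hdist : ∀ x, truncDist H r k x ≠ k → H.Reachable r x ∧ H.dist r x = truncDist H r k x := by
    intro x hx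
    by_cases hr : H.Reachable r x
    · refine ⟨hr, ?_⟩
      simp only [truncDist, hr, if_true] at hx ⊢
      omega
    · simp [truncDist, hr] at hx
  by_contra hne
  obtain ⟨hru, hdu⟩ := hdist u hne
  obtain ⟨hrv, hdv⟩ := hdist v (heq ▸ hne)
  obtain ⟨p, hp⟩ := hru.exists_walk_length_eq_dist
  obtain ⟨q, hq⟩ := hrv.exists_walk_length_eq_dist
  have hc : (p.append (.cons huv q.reverse)).length = 2 * truncDist H r k u + 1 := by
    simp only [SimpleGraph.Walk.length_append, SimpleGraph.Walk.length_cons,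
      SimpleGraph.Walk.length_reverse, hp, hq, hdu, hdv, heq]
    ring
  have := hlen _ (hc ▸ odd_two_mul_add_one _)
  have := truncDist_le (H := H) (r := r) (k := k) u
  omega

end TruncDist

theorem exists_zmod_hom_of_odd_le_length {W : Type*} {H : SimpleGraph W} (r : W) (σ : W → ℕ)
    (hσ : ∀ ⦃u v⦄, H.Adj u v → u ≠ r → v ≠ r → Odd (σ u + σ v)) {n : ℕ} (hn : Odd n)
    (hlen : ∀ c : H.Walk r r, Odd c.length → n ≤ c.length) :
    ∃ ψ : W → ZMod n, ∀ ⦃u v⦄, H.Adj u v → ψ u - ψ v = 1 ∨ ψ v - ψ u = 1 := by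
  obtain ⟨k, rfl⟩ := hn
  set d := truncDist H r k
  -- Across an edge between consecutive layers the sign is kept, since `σ` changes parity;
  -- inside the top layer it flips, and `k - (-k) = 2k = -1` in `ZMod (2k+1)`.
  let pos : W → ℤ := fun v => if Even (σ v + d v) then d v else -d v
  have hpos : ∀ ⦃u v⦄, H.Adj u v → pos u - pos v = 1 ∨ pos v - pos u = 1 ∨
      pos u - pos v = 2 * k ∨ pos v - pos u = 2 * k := by
    intro u v huv
    have h1 : d v ≤ d u + 1 := truncDist_le_add_one_of_adj huv
    have h2 : d u ≤ d v + 1 := truncDist_le_add_one_of_adj huv.symm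
    have h3 : d u = d v → d u = k := truncDist_eq_of_adj hlen huv
    have h4 : d u ≤ k := truncDist_le u
    have h5 : (σ u + σ v) % 2 = 1 ∨ d u = 0 ∨ d v = 0 := by
      by_cases hu : u = r
      · exact .inr (.inl (hu ▸ truncDist_self))
      by_cases hv : v = r
      · exact .inr (.inr (hv ▸ truncDist_self))
      exact .inl (Nat.odd_iff.mp (hσ huv hu hv))
    simp only [pos]
    split_ifs with hu hv hv <;> simp only [Nat.even_iff] at hu hv <;> omega
  refine ⟨fun v => pos v, fun u v huv => ?_⟩
  have hcast : ∀ a b : ℤ, a - b = 2 * k → ((b : ZMod (2 * k + 1)) - a) = 1 := by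
    intro a b hab
    rw [← Int.cast_sub, show b - a = 1 - ((2 * k + 1 : ℕ) : ℤ) by omega, Int.cast_sub,
      Int.cast_natCast, ZMod.natCast_self, Int.cast_one, sub_zero]
  rcases hpos huv with h | h | h | h
  · exact .inl (by rw [← Int.cast_sub, h, Int.cast_one])
  · exact .inr (by rw [← Int.cast_sub, h, Int.cast_one])
  · exact .inr (hcast _ _ h)
  · exact .inl (hcast _ _ h)

section VertexCover

variable {V : Type*} [Fintype V] {G : SimpleGraph V} {w : V → ℝ}

theorem OPT_le_sum (hw : ∀ v, 0 ≤ w v) {C : Finset V} (hC : IsVC G C) :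
    OPT G w ≤ ∑ v ∈ C, w v :=
  csInf_le ⟨0, fun _ ⟨_, _, ht⟩ => ht ▸ sum_nonneg fun v _ => hw v⟩ ⟨C, hC, rfl⟩

theorem le_OPT {a : ℝ} (h : ∀ C, IsVC G C → a ≤ ∑ v ∈ C, w v) : a ≤ OPT G w :=
  le_csInf ⟨_, univ, fun u _ _ => .inl (mem_univ u), rfl⟩ fun _ ⟨C, hC, ht⟩ => ht ▸ h C hC

theorem LPval_le_sum (hw : ∀ v, 0 ≤ w v) {x : V → ℝ} (hx0 : ∀ v, 0 ≤ x v)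
    (hx : ∀ ⦃u v⦄, G.Adj u v → 1 ≤ x u + x v) : LPval G w ≤ ∑ v, w v * x v :=
  csInf_le ⟨0, fun _ ⟨_, hy0, _, ht⟩ => ht ▸ sum_nonneg fun v _ => mul_nonneg (hw v) (hy0 v)⟩
    ⟨x, hx0, hx, rfl⟩

theorem OPT_le_mul_LPval {c : ℝ} (hc : 0 < c)
    (h : ∀ x : V → ℝ, (∀ v, 0 ≤ x v) → (∀ ⦃u v⦄, G.Adj u v → 1 ≤ x u + x v) →
      OPT G w ≤ c * ∑ v, w v * x v) :
    OPT G w ≤ c * LPval G w := by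
  rw [← div_le_iff₀' hc]
  refine le_csInf ⟨_, fun _ => 1, fun _ => zero_le_one, fun _ _ _ => by norm_num, rfl⟩ ?_
  rintro _ ⟨x, hx0, hx, rfl⟩
  rw [div_le_iff₀' hc]
  exact h x hx0 hx

end VertexCover

theorem card_filter_abs_sub_two_mul_val_le {T : ℕ} [NeZero T] (c : ℝ) {B : ℝ} (hB : 0 ≤ B) :
    (#{t : ZMod T | |c - 2 * t.val| ≤ B} : ℝ) ≤ B + 1 := by
  set a : ℤ := ⌈(c - B) / 2⌉
  set b : ℤ := ⌊(c + B) / 2⌋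
  have hcard : #{t : ZMod T | |c - 2 * t.val| ≤ B} ≤ #(Icc a b) := by
    refine card_le_card_of_injOn (fun t => (t.val : ℤ)) (fun t ht => ?_)
      (fun s _ t _ h => ZMod.val_injective T (Int.ofNat_inj.mp h))
    simp only [coe_filter, mem_univ, true_and, Set.mem_ofPred_eq, abs_le] at ht
    rw [mem_coe, mem_Icc, Int.ceil_le, Int.le_floor]
    push_cast
    constructor <;> linarith
  rw [Int.card_Icc] at hcard
  have ha : (c - B) / 2 ≤ a := Int.le_ceil _
  have hb : (b : ℝ) ≤ (c + B) / 2 := Int.floor_le _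
  calc (#{t : ZMod T | |c - 2 * t.val| ≤ B} : ℝ) ≤ ((b + 1 - a).toNat : ℝ) := by
        exact_mod_cast hcard
    _ ≤ B + 1 := by
      rcases le_or_gt (b + 1 - a) 0 with h | h
      · rw [Int.toNat_of_nonpos h]; push_cast; linarith
      · rw [← Int.cast_natCast, Int.toNat_of_nonneg h.le]; push_cast; linarith

/-- `|T - 2 a.val| / 2` is the distance from `a` to the point `T / 2` of the circle `ZMod T`. -/
theorem abs_sub_two_mul_val_add_le {T K : ℕ} [NeZero T] (hKT : 2 * K ≤ T) (a : ZMod T) :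
    |(T : ℤ) - 2 * a.val| + |(T : ℤ) - 2 * (a + K).val| ≤ 2 * T - 2 * K := by
  have hT : 0 < T := Nat.pos_of_ne_zero (NeZero.ne T)
  have hK : (K : ZMod T).val = K := ZMod.val_natCast_of_lt (by omega)
  have ha := a.val_lt
  rcases lt_or_ge (a.val + (K : ZMod T).val) T with h | h
  · rw [ZMod.val_add_of_lt h, hK]
    rw [hK] at h
    rcases abs_cases ((T : ℤ) - 2 * a.val) with ⟨h1, -⟩ | ⟨h1, -⟩ <;>
    rcases abs_cases ((T : ℤ) - 2 * ((a.val + K : ℕ) : ℤ)) with ⟨h2, -⟩ | ⟨h2, -⟩ <;> omega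
  · rw [ZMod.val_add_of_le h, hK]
    rw [hK] at h
    rcases abs_cases ((T : ℤ) - 2 * a.val) with ⟨h1, -⟩ | ⟨h1, -⟩ <;>
    rcases abs_cases ((T : ℤ) - 2 * ((a.val + K - T : ℕ) : ℤ)) with ⟨h2, -⟩ | ⟨h2, -⟩ <;> omega

section Rounding

variable {V : Type*} [Fintype V] {G : SimpleGraph V} {w : V → ℝ}

theorem mul_OPT_le_of_circular_hom {T K : ℕ} [NeZero T] (hKT : 2 * K ≤ T) (p : V → ZMod T)
    (hp : ∀ ⦃u v⦄, G.Adj u v → p u - p v = K ∨ p v - p u = K) (hw : ∀ v, 0 ≤ w v)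
    {x : V → ℝ} (hx0 : ∀ v, 0 ≤ x v) (hx : ∀ ⦃u v⦄, G.Adj u v → 1 ≤ x u + x v) :
    T * OPT G w ≤ (2 * T - 2 * K) * ∑ v, w v * x v + ∑ v, w v := by
  classical
  have hKT' : (0 : ℝ) ≤ 2 * T - 2 * K := by
    have : (2 * K : ℝ) ≤ T := by exact_mod_cast hKT
    linarith
  let C : ZMod T → Finset V := fun t =>
    {v | |(T : ℝ) - 2 * (t + p v).val| ≤ (2 * T - 2 * K) * x v}
  have hcover : ∀ t, IsVC G (C t) := by
    intro t u v huv
    by_contra! h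
    simp only [C, mem_filter, mem_univ, true_and, not_le] at h
    have hshift : ∀ a b, p a - p b = K → |(T : ℝ) - 2 * (t + p a).val| +
        |(T : ℝ) - 2 * (t + p b).val| ≤ 2 * T - 2 * K := by
      intro a b hab
      have hab' : t + p a = t + p b + K := by rw [← hab]; ring
      rw [hab', add_comm]
      exact_mod_cast abs_sub_two_mul_val_add_le hKT (t + p b)
    have key := (hp huv).elim (hshift u v) fun h' => by linarith [hshift v u h']
    nlinarith [hx huv]
  have hcount : ∀ v, (#{t | v ∈ C t} : ℝ) ≤ (2 * T - 2 * K) * x v + 1 := by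
    intro v
    have : #{t | v ∈ C t} = #{t : ZMod T | |(T : ℝ) - 2 * t.val| ≤ (2 * T - 2 * K) * x v} := by
      refine card_equiv (Equiv.addRight (p v)) fun t => ?_
      simp [C]
    rw [this]
    exact card_filter_abs_sub_two_mul_val_le _ (mul_nonneg hKT' (hx0 v))
  calc (T : ℝ) * OPT G w = ∑ t : ZMod T, OPT G w := by simp
    _ ≤ ∑ t : ZMod T, ∑ v ∈ C t, w v := sum_le_sum fun t _ => OPT_le_sum hw (hcover t)
    _ = ∑ v, ∑ t with v ∈ C t, w v := sum_comm' (by simp)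
    _ = ∑ v, #{t | v ∈ C t} * w v := by simp only [sum_const, nsmul_eq_mul]
    _ ≤ ∑ v, ((2 * T - 2 * K) * x v + 1) * w v :=
      sum_le_sum fun v _ => mul_le_mul_of_nonneg_right (hcount v) (hw v)
    _ = (2 * T - 2 * K) * ∑ v, w v * x v + ∑ v, w v := by
      rw [mul_sum, ← sum_add_distrib]
      exact sum_congr rfl fun v _ => by ring

open Filter Topology in
theorem OPT_le_of_cycle_hom {n : ℕ} (hn : Odd n) (ψ : V → ZMod n)
    (hψ : ∀ ⦃u v⦄, G.Adj u v → ψ u - ψ v = 1 ∨ ψ v - ψ u = 1) (hw : ∀ v, 0 ≤ w v)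
    {x : V → ℝ} (hx0 : ∀ v, 0 ≤ x v) (hx : ∀ ⦃u v⦄, G.Adj u v → 1 ≤ x u + x v) :
    OPT G w ≤ (1 + 1 / n) * ∑ v, w v * x v := by
  obtain ⟨k, rfl⟩ := hn
  set c := (1 + 1 / ((2 * k + 1 : ℕ) : ℝ)) * ∑ v, w v * x v
  set W := (∑ v, w v) / (2 * k + 1 : ℕ)
  have hm : ∀ m : ℕ, 1 ≤ m → OPT G w ≤ c + W / m := by
    intro m hm
    have : NeZero ((2 * k + 1) * m) := ⟨by positivity⟩
    -- wrap `ZMod (2k+1)` around `ZMod ((2k+1)m)` so that neighbours end up `km` apart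
    let L : ZMod (2 * k + 1) →+ ZMod ((2 * k + 1) * m) :=
      ZMod.lift _ ⟨zmultiplesHom _ ((k * m : ℕ) : ZMod ((2 * k + 1) * m)), by
        rw [zmultiplesHom_apply, natCast_zsmul, nsmul_eq_mul, ← Nat.cast_mul,
          show (2 * k + 1) * (k * m) = k * ((2 * k + 1) * m) by ring, Nat.cast_mul,
          ZMod.natCast_self, mul_zero]⟩
    have hL : L 1 = (k * m : ℕ) := by
      rw [← Int.cast_one, ZMod.lift_coe]
      simp
    have := mul_OPT_le_of_circular_hom (T := (2 * k + 1) * m) (K := k * m) (by nlinarith)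
      (L ∘ ψ) (fun u v huv => (hψ huv).imp (fun h => by simp [← map_sub, h, hL])
        (fun h => by simp [← map_sub, h, hL])) hw hx0 hx
    have hT : (0 : ℝ) < ((2 * k + 1) * m : ℕ) := by positivity
    rw [← mul_le_mul_iff_right₀ hT]
    refine this.trans_eq ?_
    simp only [c, W]
    push_cast
    field_simp
    ring
  have hlim : Tendsto (fun m : ℕ => c + W / m) atTop (𝓝 c) := by
    simpa using tendsto_const_nhds.add (tendsto_const_div_atTop_nhds_zero_nat W)
  exact ge_of_tendsto hlim (eventually_atTop.mpr ⟨1, hm⟩)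

theorem OPT_le_mul_LPval_of_contract {S : Set V} (hS : G.IsIndepSet S) (σ : V → ℕ)
    (hσ : ∀ ⦃u v⦄, G.Adj u v → u ∉ S → v ∉ S → Odd (σ u + σ v)) {n : ℕ} (hn : Odd n)
    (hlen : ∀ c : (contract G S).Walk none none, Odd c.length → n ≤ c.length)
    (hw : ∀ v, 0 ≤ w v) :
    OPT G w ≤ (1 + 1 / n) * LPval G w := by
  obtain ⟨ψ, hψ⟩ := exists_zmod_hom_of_odd_le_length (H := contract G S) none
    (fun x => x.elim 0 fun v => σ v)
    (by
      rintro (_ | u) (_ | v) huv hu hv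
      · exact absurd rfl hu
      · exact absurd rfl hu
      · exact absurd rfl hv
      · exact hσ (contract_adj_some_some.mp huv) u.2 v.2) hn hlen
  exact OPT_le_mul_LPval (by positivity) fun x hx0 hx =>
    OPT_le_of_cycle_hom hn (ψ ∘ contractHom hS) (fun u v huv => hψ ((contractHom hS).map_rel huv))
      hw hx0 hx

end Rounding

theorem exists_odd_add_of_three_coloring {V : Type*} {G : SimpleGraph V} {Vc : Fin 3 → Finset V}
    (hcover : ∀ v, ∃ j, v ∈ Vc j) (hind : ∀ i, IsIndep G (Vc i)) (i : Fin 3) :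
    ∃ σ : V → ℕ, ∀ ⦃u v⦄, G.Adj u v → u ∉ Vc i → v ∉ Vc i → Odd (σ u + σ v) := by
  classical
  have hlast : ∀ v, v ∉ Vc i → v ∉ Vc (i + 1) → v ∈ Vc (i + 2) := by
    intro v h0 h1
    obtain ⟨j, hj⟩ := hcover v
    have : j = i ∨ j = i + 1 ∨ j = i + 2 := by fin_cases i <;> fin_cases j <;> decide
    rcases this with rfl | rfl | rfl
    exacts [absurd hj h0, absurd hj h1, hj]
  refine ⟨fun v => if v ∈ Vc (i + 1) then 0 else 1, fun u v huv hu hv => ?_⟩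
  by_cases hu1 : u ∈ Vc (i + 1) <;> by_cases hv1 : v ∈ Vc (i + 1) <;>
    simp only [hu1, hv1, if_true, if_false]
  · exact absurd huv (hind _ hu1 hv1)
  · exact odd_one
  · exact odd_one
  · exact absurd huv (hind _ (hlast u hu hu1) (hlast v hv hv1))

theorem IsVC.length_le_two_mul_card_getVert_mem {V : Type*} [DecidableEq V] {G : SimpleGraph V}
    {C : Finset V} (hC : IsVC G C) {u : V} (c : G.Walk u u) :
    c.length ≤ 2 * #{i ∈ range c.length | c.getVert i ∈ C} := by
  set f : ℕ → ℕ := fun i => if c.getVert i ∈ C then 1 else 0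
  have hshift : ∑ i ∈ range c.length, f (i + 1) = ∑ i ∈ range c.length, f i := by
    have h := sum_range_succ' f c.length
    have hf : f c.length = f 0 := by simp [f]
    rw [sum_range_succ, hf] at h
    omega
  calc c.length = ∑ i ∈ range c.length, 1 := by simp
    _ ≤ ∑ i ∈ range c.length, (f i + f (i + 1)) := by
      refine sum_le_sum fun i hi => ?_
      rcases hC (c.adj_getVert_succ (mem_range.mp hi)) with h | h <;> simp [f, h]
    _ = 2 * #{i ∈ range c.length | c.getVert i ∈ C} := by
      rw [sum_add_distrib, hshift, ← two_mul, card_filter]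

section VisitWeight

variable {V : Type*} [Fintype V] [DecidableEq V] {G : SimpleGraph V} {u : V}

def visitWeight (c : G.Walk u u) (v : V) : ℝ :=
  #{i ∈ range c.length | c.getVert i = v}

theorem le_OPT_visitWeight (c : G.Walk u u) (hc : Odd c.length) :
    (c.length + 1 : ℝ) / 2 ≤ OPT G (visitWeight c) := by
  refine le_OPT fun C hC => ?_
  have h := hC.length_le_two_mul_card_getVert_mem c
  obtain ⟨k, hk⟩ := hc
  have h' : c.length + 1 ≤ 2 * #{i ∈ range c.length | c.getVert i ∈ C} := by omega
  simp only [visitWeight]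
  rw [← Nat.cast_sum, sum_card_fiberwise_eq_card_filter, div_le_iff₀ two_pos]
  exact_mod_cast h'.trans_eq (mul_comm _ _)

theorem LPval_visitWeight_le (c : G.Walk u u) : LPval G (visitWeight c) ≤ c.length / 2 := by
  refine (LPval_le_sum (fun _ => Nat.cast_nonneg _) (x := fun _ => 1 / 2) (fun _ => by norm_num)
    fun _ _ _ => by norm_num).trans_eq ?_
  rw [← sum_mul, ← Nat.cast_sum, sum_card_fiberwise_eq_card_filter]
  simp only [mem_univ, filter_true, card_range]
  ring

end VisitWeight

theorem IG_eq_of_odd_closed_walk {V : Type*} [Fintype V] {G : SimpleGraph V} {u : V}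
    (c : G.Walk u u) (hc : Odd c.length)
    (hbound : ∀ w : V → ℝ, (∀ v, 0 ≤ w v) → OPT G w ≤ (1 + 1 / c.length) * LPval G w) :
    IG G = 1 + 1 / c.length := by
  classical
  have hw : ∀ v, 0 ≤ visitWeight c v := fun v => Nat.cast_nonneg _
  have hOPT := le_OPT_visitWeight c hc
  have hratio := hbound _ hw
  have hLPpos : 0 < LPval G (visitWeight c) :=
    pos_of_mul_pos_right (lt_of_lt_of_le (by positivity) (hOPT.trans hratio)) (by positivity)
  refine IsGreatest.csSup_eq ⟨⟨_, hw, hLPpos, ?_⟩, ?_⟩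
  · rw [eq_div_iff hLPpos.ne']
    refine le_antisymm ?_ hratio
    have hL : (0 : ℝ) < c.length := by exact_mod_cast hc.pos
    calc (1 + 1 / (c.length : ℝ)) * LPval G (visitWeight c)
        ≤ (1 + 1 / c.length) * (c.length / 2) := by gcongr; exact LPval_visitWeight_le c
      _ = (c.length + 1) / 2 := by field_simp
      _ ≤ OPT G (visitWeight c) := hOPT
  · rintro _ ⟨w, hw, hpos, rfl⟩
    exact (div_le_iff₀ hpos).mpr (hbound w hw)

theorem min_min_mem {α : Type*} [LinearOrder α] (f : Fin 3 → α) :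
    ∃ i, min (f 0) (min (f 1) (f 2)) = f i := by
  rcases min_choice (f 0) (min (f 1) (f 2)) with h | h
  · exact ⟨0, h⟩
  rcases min_choice (f 1) (f 2) with h' | h'
  exacts [⟨1, h.trans h'⟩, ⟨2, h.trans h'⟩]

theorem min_min_eq_of_forall_le {α : Type*} [LinearOrder α] {f : Fin 3 → α} {i : Fin 3}
    (h : ∀ j, f i ≤ f j) : min (f 0) (min (f 1) (f 2)) = f i :=
  le_antisymm (by fin_cases i <;> simp) (le_min (h 0) (le_min (h 1) (h 2)))

theorem integrality_gap_three_colorable_general {V : Type*} [Fintype V]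
    (G : SimpleGraph V)
    (Vc : Fin 3 → Finset V)
    (hcover : ∀ v : V, ∃! i : Fin 3, v ∈ Vc i)
    (hind : ∀ i, IsIndep G (Vc i))
    (ρ : Fin 3 → ℕ)
    (hring : ∀ i : Fin 3, ¬ (contract G ↑(Vc i)).Colorable 2 ∧ 2 ≤ ρ i ∧
      HasOddGirth (contract G ↑(Vc i)) (2 * ρ i - 1)) :
    (∀ w : V → ℝ, (∀ v, 0 ≤ w v) →
        OPT G w ≤ (1 + min (1 / (2 * (ρ 0 : ℝ) - 1))
            (min (1 / (2 * (ρ 1 : ℝ) - 1)) (1 / (2 * (ρ 2 : ℝ) - 1)))) * LPval G w) ∧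
      ((∃ i : Fin 3, (Vc i).card = 1) →
        IG G = 1 + min (1 / (2 * (ρ 0 : ℝ) - 1))
            (min (1 / (2 * (ρ 1 : ℝ) - 1)) (1 / (2 * (ρ 2 : ℝ) - 1)))) := by
  set f : Fin 3 → ℝ := fun i => 1 / (2 * (ρ i : ℝ) - 1)
  have hS : ∀ i, G.IsIndepSet (Vc i : Set V) := fun i _ hu _ hv _ => hind i hu hv
  have hcast : ∀ i, f i = 1 / (2 * ρ i - 1 : ℕ) := fun i => by
    rw [Nat.cast_sub (by have := (hring i).2.1; omega)]
    push_cast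
    rfl
  have hclass : ∀ i w, (∀ v, 0 ≤ w v) → OPT G w ≤ (1 + f i) * LPval G w := fun i w hw => by
    obtain ⟨σ, hσ⟩ := exists_odd_add_of_three_coloring (fun v => (hcover v).exists) hind i
    rw [hcast]
    exact OPT_le_mul_LPval_of_contract (hS i) σ hσ (hring i).2.2.1
      (fun c => (hring i).2.2.le_length c) hw
  have hpart1 : ∀ w, (∀ v, 0 ≤ w v) → OPT G w ≤ (1 + min (f 0) (min (f 1) (f 2))) * LPval G w :=
    fun w hw => let ⟨i, hi⟩ := min_min_mem f; hi ▸ hclass i w hw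
  refine ⟨hpart1, fun ⟨i, hi⟩ => ?_⟩
  obtain ⟨s, hs⟩ := card_eq_one.mp hi
  have hgirth := (hring i).2.2
  rw [hs, coe_singleton] at hgirth
  obtain ⟨u, c, hc⟩ := hgirth.exists_walk_of_contract_singleton
  have hodd : Odd c.length := hc ▸ hgirth.1
  have hmin : min (f 0) (min (f 1) (f 2)) = 1 / c.length := by
    rw [min_min_eq_of_forall_le (i := i) fun j => ?_, hcast, hc]
    rw [hcast, hcast]
    have := (hring j).2.1
    have := (hring j).2.2.le_length_of_contract (hS j) c hodd
    exact one_div_le_one_div_of_le (by norm_cast; omega) (by norm_cast; omega)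
  rw [hmin]
  exact IG_eq_of_odd_closed_walk c hodd fun w hw => hmin ▸ hpart1 w hw

/-- for a non-bipartite 3-colorable graph with color classes `V₁,V₂,V₃`
whose contractions `G/Vᵢ` have odd girths `2ρᵢ-1`, the integrality gap is at most
`1 + minᵢ 1/(2ρᵢ-1)`, with equality if some color class is a singleton. -/
theorem integrality_gap_three_colorable {V : Type*} [Fintype V] [DecidableEq V]
    (G : SimpleGraph V) (hnb : ¬ G.Colorable 2)
    (Vc : Fin 3 → Finset V)
    (hcover : ∀ v : V, ∃! i : Fin 3, v ∈ Vc i)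
    (hind : ∀ i, IsIndep G (Vc i))
    (ρ : Fin 3 → ℕ)
    (hring : ∀ i : Fin 3, ¬ (contract G ↑(Vc i)).Colorable 2 ∧ 2 ≤ ρ i ∧
      HasOddGirth (contract G ↑(Vc i)) (2 * ρ i - 1)) :
    (∀ w : V → ℝ, (∀ v, 0 ≤ w v) →
        OPT G w ≤ (1 + min (1 / (2 * (ρ 0 : ℝ) - 1))
            (min (1 / (2 * (ρ 1 : ℝ) - 1)) (1 / (2 * (ρ 2 : ℝ) - 1)))) * LPval G w) ∧
      ((∃ i : Fin 3, (Vc i).card = 1) →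
        IG G = 1 + min (1 / (2 * (ρ 0 : ℝ) - 1))
            (min (1 / (2 * (ρ 1 : ℝ) - 1)) (1 / (2 * (ρ 2 : ℝ) - 1)))) :=
  integrality_gap_three_colorable_general G Vc hcover hind ρ hring
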